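/- arXiv:1604.02244 — 3 statements merged into one kernel-verified Lean document; each statement's English description precedes it below -/
import Mathlib

section
/- (Exponential John--Nirenberg inequality.) There is a constant $\varepsilon_n>0$, depending only on the dimension $n$, such that if $b$ is a real-valued locally integrable function on $\mathbb{R}^n$ with $\|b\|_{BMO}\le \varepsilon_n$, then for every cube $Q\subset\mathbb{R}^n$, $\frac{1}{|Q|}\int_Q e^{|b-\langle b\rangle_Q|}\,dx\le 2$. -/
open MeasureTheory ENNReal

noncomputable section

/-- An axis-parallel cube in `ℝⁿ` (with positive side length). -/
def IsCube {n : ℕ} (Q : Set (Fin n → ℝ)) : Prop :=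
  ∃ (a : Fin n → ℝ) (h : ℝ), 0 < h ∧ Q = Set.Icc a (a + fun _ => h)

/-- Average of an `ℝ≥0∞`-valued function over a set. -/
def avgL {n : ℕ} (Q : Set (Fin n → ℝ)) (f : (Fin n → ℝ) → ℝ≥0∞) : ℝ≥0∞ :=
  (∫⁻ x in Q, f x) / volume Q

/-- Average of a real-valued function over a set. -/
def avgR {n : ℕ} (Q : Set (Fin n → ℝ)) (f : (Fin n → ℝ) → ℝ) : ℝ :=
  (∫ x in Q, f x) / (volume Q).toReal

/-- The `A_p` product for a single cube. -/
def apTerm (n : ℕ) (p : ℝ) (w : (Fin n → ℝ) → ℝ) (Q : Set (Fin n → ℝ)) : ℝ≥0∞ :=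
  avgL Q (fun x => ENNReal.ofReal (w x)) *
    avgL Q (fun x => ENNReal.ofReal (w x) ^ (1 - p / (p - 1))) ^ (p - 1)

/-- The Muckenhoupt `A_p` constant. -/
def apConst (n : ℕ) (p : ℝ) (w : (Fin n → ℝ) → ℝ) : ℝ≥0∞ :=
  ⨆ (Q : Set (Fin n → ℝ)) (_ : IsCube Q), apTerm n p w Q

/-- A weight: locally integrable and a.e. positive. -/
def IsWeight (n : ℕ) (w : (Fin n → ℝ) → ℝ) : Prop :=
  LocallyIntegrable w volume ∧ ∀ᵐ x ∂(volume : Measure (Fin n → ℝ)), 0 < w x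

/-- BMO norm of a real-valued function. -/
def bmoNorm (n : ℕ) (b : (Fin n → ℝ) → ℝ) : ℝ≥0∞ :=
  ⨆ (Q : Set (Fin n → ℝ)) (_ : IsCube Q),
    (∫⁻ x in Q, (‖b x - avgR Q b‖₊ : ℝ≥0∞)) / volume Q

/-- Weighted BMO norm of a real-valued function. -/
def bmoNormW (n : ℕ) (ν b : (Fin n → ℝ) → ℝ) : ℝ≥0∞ :=
  ⨆ (Q : Set (Fin n → ℝ)) (_ : IsCube Q),
    (∫⁻ x in Q, (‖b x - avgR Q b‖₊ : ℝ≥0∞)) / (∫⁻ x in Q, ENNReal.ofReal (ν x))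

/-- The (uncentered, cube-based) Hardy–Littlewood maximal operator. -/
def hlMax (n : ℕ) (f : (Fin n → ℝ) → ℝ≥0∞) (x : Fin n → ℝ) : ℝ≥0∞ :=
  ⨆ (Q : Set (Fin n → ℝ)) (_ : IsCube Q) (_ : x ∈ Q), avgL Q f

/-- The Fujii–Wilson `A_∞` constant. -/
def fwConst (n : ℕ) (w : (Fin n → ℝ) → ℝ) : ℝ≥0∞ :=
  ⨆ (Q : Set (Fin n → ℝ)) (_ : IsCube Q),
    (∫⁻ x in Q, hlMax n (Q.indicator fun y => ENNReal.ofReal (w y)) x) /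
      (∫⁻ x in Q, ENNReal.ofReal (w x))

/-- `(w)_{A_p} := max([w]_{A_∞}, [σ]_{A_∞})` where `σ = w^{1-p'}` is the dual weight. -/
def apMax (n : ℕ) (p : ℝ) (w : (Fin n → ℝ) → ℝ) : ℝ≥0∞ :=
  max (fwConst n w) (fwConst n (fun x => w x ^ (1 - p / (p - 1))))

/-- The `L^p(w)` (quasi-)norm. -/
def wNorm (n : ℕ) (p : ℝ) (w : (Fin n → ℝ) → ℝ) (f : (Fin n → ℝ) → ℝ) : ℝ≥0∞ :=
  (∫⁻ x, (‖f x‖₊ : ℝ≥0∞) ^ p * ENNReal.ofReal (w x)) ^ (1 / p)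

/-- The operator (quasi-)norm from `L^p(μ)` to `L^p(λ)`. -/
def opNormW (n : ℕ) (p : ℝ) (μ lam : (Fin n → ℝ) → ℝ)
    (S : ((Fin n → ℝ) → ℝ) → ((Fin n → ℝ) → ℝ)) : ℝ≥0∞ :=
  sInf {c : ℝ≥0∞ | ∀ f, wNorm n p lam (S f) ≤ c * wNorm n p μ f}

/-- The commutator `[b, S] = M_b ∘ S - S ∘ M_b`. -/
def commOp (n : ℕ) (b : (Fin n → ℝ) → ℝ)
    (S : ((Fin n → ℝ) → ℝ) → ((Fin n → ℝ) → ℝ)) :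
    ((Fin n → ℝ) → ℝ) → ((Fin n → ℝ) → ℝ) :=
  fun f x => b x * S f x - S (fun y => b y * f y) x

/-!
Calderón–Zygmund stopping at height `4ε` for `|b - ⟨b⟩_Q|` on the dyadic subcubes of `Q`: the
stopping cubes have total measure at most `|Q|/4`, the average of `b` on each of them is within
`2ⁿ·4ε` of `⟨b⟩_Q`, and by Lebesgue differentiation `|b - ⟨b⟩_Q| ≤ 4ε` a.e. off them. Iterating
inside the stopping cubes gives `|{x ∈ Q : kM ≤ |b x - ⟨b⟩_Q|}| ≤ 4⁻ᵏ|Q|` with `M = (2ⁿ+1)·4ε`,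
and summing `e^{(k+1)M}` against these level sets bounds the exponential average by
`e^M / (1 - e^M/4) ≤ 2` once `M ≤ 1/4`. Cubes are taken half-open, so that dyadic subcubes of the
same generation are disjoint; they differ from the closed cubes of the statement by null sets.
-/

open Filter Topology Metric

section Average

variable {α : Type*} [MeasurableSpace α] {μ : Measure α} {f : α → ℝ} {s : Set α}

lemma measureReal_mul_setAverage_le_of_subset {t : Set α} (hf : IntegrableOn f t μ)
    (hf0 : 0 ≤ᵐ[μ.restrict t] f) (hst : s ⊆ t) (ht : μ t ≠ ⊤) :
    μ.real s * ⨍ x in s, f x ∂μ ≤ μ.real t * ⨍ x in t, f x ∂μ := by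
  rw [← smul_eq_mul, ← smul_eq_mul, measure_smul_setAverage _ ht,
    measure_smul_setAverage _ (measure_ne_top_of_subset hst ht)]
  exact setIntegral_mono_set hf hf0 hst.eventuallyLE

lemma ofReal_mul_le_setLIntegral_of_le_setAverage {t : ℝ} (hf : IntegrableOn f s μ)
    (hf0 : 0 ≤ᵐ[μ.restrict s] f) (hs : μ s ≠ ⊤) (ht : t ≤ ⨍ x in s, f x ∂μ) :
    ENNReal.ofReal t * μ s ≤ ∫⁻ x in s, ENNReal.ofReal (f x) ∂μ := by
  rcases eq_or_ne (μ s) 0 with hs0 | hs0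
  · simp [hs0]
  rw [← ENNReal.le_div_iff_mul_le (.inl hs0) (.inl hs), ← ofReal_setAverage hf hf0]
  exact ENNReal.ofReal_le_ofReal ht

lemma setLIntegral_le_ofReal_mul_of_setAverage_le {t : ℝ} (hf : IntegrableOn f s μ)
    (hf0 : 0 ≤ᵐ[μ.restrict s] f) (hs : μ s ≠ ⊤) (ht : ⨍ x in s, f x ∂μ ≤ t) :
    ∫⁻ x in s, ENNReal.ofReal (f x) ∂μ ≤ ENNReal.ofReal t * μ s := by
  rcases eq_or_ne (μ s) 0 with hs0 | hs0
  · simp [Measure.restrict_eq_zero.2 hs0]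
  rw [← ENNReal.div_le_iff hs0 hs, ← ofReal_setAverage hf hf0]
  exact ENNReal.ofReal_le_ofReal ht

lemma abs_setAverage_sub_le (hf : IntegrableOn f s μ) (hs0 : μ s ≠ 0) (hs : μ s ≠ ⊤) (c : ℝ) :
    |(⨍ x in s, f x ∂μ) - c| ≤ ⨍ x in s, |f x - c| ∂μ := by
  have hsub : (⨍ x in s, f x ∂μ) - c = ⨍ x in s, (f x - c) ∂μ := by
    rw [setAverage_eq, setAverage_eq, integral_sub hf (integrableOn_const hs), smul_sub,
      ← setAverage_eq, ← setAverage_eq, setAverage_const hs0 hs]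
  rw [hsub, setAverage_eq, setAverage_eq, smul_eq_mul, smul_eq_mul, abs_mul,
    abs_of_nonneg (inv_nonneg.2 measureReal_nonneg)]
  exact mul_le_mul_of_nonneg_left abs_integral_le_integral_abs (inv_nonneg.2 measureReal_nonneg)

theorem lintegral_ofReal_exp_le_two_mul {g : α → ℝ} (hg : AEMeasurable g μ)
    (hg0 : ∀ x, 0 ≤ g x) {M : ℝ} (hM : 0 < M) (hexp : Real.exp M ≤ 4 / 3)
    (hlevel : ∀ k : ℕ, μ {x | k * M ≤ g x} ≤ 4⁻¹ ^ k * μ Set.univ) :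
    ∫⁻ x, ENNReal.ofReal (Real.exp (g x)) ∂μ ≤ 2 * μ Set.univ := by
  set r := Real.exp M
  have hr : 0 < r := Real.exp_pos M
  have hpt : ∀ x, ENNReal.ofReal (Real.exp (g x)) ≤
      ∑' k : ℕ, ENNReal.ofReal (r ^ (k + 1)) * {x | k * M ≤ g x}.indicator 1 x := by
    intro x
    set k := ⌊g x / M⌋₊
    have hk : (k : ℝ) * M ≤ g x := (le_div_iff₀ hM).1 (Nat.floor_le (div_nonneg (hg0 x) hM.le))
    have hk' : g x ≤ (k + 1) * M := (div_le_iff₀ hM).1 (Nat.lt_floor_add_one _).le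
    refine le_trans ?_ (ENNReal.le_tsum k)
    rw [Set.indicator_of_mem (show x ∈ {x | k * M ≤ g x} from hk), Pi.one_apply, mul_one,
      ← Real.exp_nat_mul]
    exact ENNReal.ofReal_le_ofReal (Real.exp_le_exp.2 (by push_cast; linarith))
  have hmeas : ∀ k : ℕ, NullMeasurableSet {x | k * M ≤ g x} μ := fun k =>
    nullMeasurableSet_le aemeasurable_const hg
  calc ∫⁻ x, ENNReal.ofReal (Real.exp (g x)) ∂μ
      ≤ ∫⁻ x, ∑' k : ℕ, ENNReal.ofReal (r ^ (k + 1)) * {x | k * M ≤ g x}.indicator 1 x ∂μ :=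
        lintegral_mono hpt
    _ = ∑' k : ℕ, ENNReal.ofReal (r ^ (k + 1)) * μ {x | k * M ≤ g x} := by
        rw [lintegral_tsum fun k => (aemeasurable_const.indicator₀ (f := 1) (hmeas k)).const_mul _]
        simp_rw [lintegral_const_mul' _ _ ENNReal.ofReal_ne_top,
          lintegral_indicator_one₀ (hmeas _)]
    _ ≤ ∑' k : ℕ, ENNReal.ofReal (r * (r / 4) ^ k) * μ Set.univ := by
        refine ENNReal.tsum_le_tsum fun k => ?_
        have hterm : ENNReal.ofReal (r * (r / 4) ^ k) =
            ENNReal.ofReal (r ^ (k + 1)) * 4⁻¹ ^ k := by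
          rw [div_eq_mul_inv, mul_pow, ← mul_assoc, ← pow_succ',
            ENNReal.ofReal_mul (pow_nonneg hr.le _),
            ENNReal.ofReal_pow (by norm_num : (0 : ℝ) ≤ 4⁻¹),
            ENNReal.ofReal_inv_of_pos (by norm_num), ENNReal.ofReal_ofNat]
        grw [hlevel k, hterm, mul_assoc]
    _ = ENNReal.ofReal (r * (1 - r / 4)⁻¹) * μ Set.univ := by
        rw [ENNReal.tsum_mul_right, ← ENNReal.ofReal_tsum_of_nonneg (fun k => by positivity)
          ((summable_geometric_of_lt_one (by positivity) (by linarith)).mul_left r),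
          tsum_mul_left, tsum_geometric_of_lt_one (by positivity) (by linarith)]
    _ ≤ 2 * μ Set.univ := by
        gcongr
        refine (ENNReal.ofReal_le_ofReal ?_).trans (ENNReal.ofReal_ofNat 2).le
        rw [← div_eq_mul_inv, div_le_iff₀ (by linarith)]
        linarith

lemma MeasureTheory.LocallyIntegrable.abs_sub_const [TopologicalSpace α]
    [SecondCountableTopology α] [IsLocallyFiniteMeasure μ] {b : α → ℝ}
    (hb : LocallyIntegrable b μ) (c : ℝ) : LocallyIntegrable (fun x => |b x - c|) μ :=
  (hb.sub (locallyIntegrable_const c)).mono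
    (hb.aestronglyMeasurable.sub aestronglyMeasurable_const).norm (.of_forall fun _ => by simp)

end Average

section Cubes

variable {n : ℕ}

def halfOpenCube (a : Fin n → ℝ) (h : ℝ) : Set (Fin n → ℝ) :=
  Set.univ.pi fun i => Set.Ico (a i) (a i + h)

lemma measurableSet_halfOpenCube (a : Fin n → ℝ) (h : ℝ) : MeasurableSet (halfOpenCube a h) :=
  .univ_pi fun _ => measurableSet_Ico

lemma volume_halfOpenCube (a : Fin n → ℝ) (h : ℝ) :
    volume (halfOpenCube a h) = ENNReal.ofReal h ^ n := by
  simp [halfOpenCube, volume_pi_pi, Real.volume_Ico]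

lemma volume_halfOpenCube_ne_top (a : Fin n → ℝ) (h : ℝ) : volume (halfOpenCube a h) ≠ ⊤ := by
  simp [volume_halfOpenCube]

lemma volume_halfOpenCube_ne_zero (a : Fin n → ℝ) {h : ℝ} (hh : 0 < h) :
    volume (halfOpenCube a h) ≠ 0 := by
  simp [volume_halfOpenCube, hh]

lemma measureReal_halfOpenCube (a : Fin n → ℝ) {h : ℝ} (hh : 0 ≤ h) :
    volume.real (halfOpenCube a h) = h ^ n := by
  simp [measureReal_def, volume_halfOpenCube, hh]

lemma halfOpenCube_ae_eq_Icc (a : Fin n → ℝ) (h : ℝ) :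
    halfOpenCube a h =ᵐ[volume] Set.Icc a (a + fun _ => h) :=
  Measure.univ_pi_Ico_ae_eq_Icc

lemma halfOpenCube_subset_closedBall {a : Fin n → ℝ} {h : ℝ} (hh : 0 ≤ h) :
    halfOpenCube a h ⊆ closedBall (a + fun _ => h / 2) (h / 2) := by
  intro x hx
  rw [mem_closedBall, dist_pi_le_iff (by positivity)]
  intro i
  have := hx i (Set.mem_univ i)
  simp only [Set.mem_Ico] at this
  rw [Real.dist_eq, abs_le, Pi.add_apply]
  constructor <;> linarith

lemma halfOpenCube_ae_eq_closedBall (a : Fin n → ℝ) {h : ℝ} (hh : 0 ≤ h) :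
    halfOpenCube a h =ᵐ[volume] closedBall (a + fun _ => h / 2) (h / 2) := by
  refine ae_eq_of_subset_of_measure_ge (halfOpenCube_subset_closedBall hh) ?_
    (measurableSet_halfOpenCube a h).nullMeasurableSet measure_closedBall_lt_top.ne
  rw [volume_halfOpenCube, Real.volume_pi_closedBall _ (by positivity), Fintype.card_fin,
    mul_div_cancel₀ h two_ne_zero, ENNReal.ofReal_pow hh]

lemma integrableOn_halfOpenCube {f : (Fin n → ℝ) → ℝ} (hf : LocallyIntegrable f volume)
    (a : Fin n → ℝ) (h : ℝ) : IntegrableOn f (halfOpenCube a h) :=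
  (hf.integrableOn_isCompact isCompact_Icc).mono_set_ae (halfOpenCube_ae_eq_Icc a h).le

/-- The generation-`m` dyadic subcubes of `halfOpenCube a h` are the cubes
`a + 2⁻ᵐh (k + [0,1)ⁿ)`, `k ∈ ℤⁿ`; this is the index `k` of the one containing `x`. -/
def dyadicIndex (a : Fin n → ℝ) (h : ℝ) (m : ℕ) (x : Fin n → ℝ) : Fin n → ℤ :=
  fun i => ⌊(x i - a i) / (h / 2 ^ m)⌋

def dyadicCube (a : Fin n → ℝ) (h : ℝ) (m : ℕ) (x : Fin n → ℝ) : Set (Fin n → ℝ) :=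
  halfOpenCube (fun i => a i + h / 2 ^ m * dyadicIndex a h m x i) (h / 2 ^ m)

section Dyadic

variable {a : Fin n → ℝ} {h : ℝ}

lemma mem_dyadicCube_iff (hh : 0 < h) {m : ℕ} {x y : Fin n → ℝ} :
    y ∈ dyadicCube a h m x ↔ dyadicIndex a h m y = dyadicIndex a h m x := by
  have hs : 0 < h / 2 ^ m := by positivity
  simp only [dyadicCube, halfOpenCube, Set.mem_univ_pi, Set.mem_Ico, funext_iff, dyadicIndex,
    Int.floor_eq_iff, le_div_iff₀ hs, div_lt_iff₀ hs]
  refine forall_congr' fun i => and_congr ?_ ?_ <;> constructor <;> intro <;> linarith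

lemma mem_dyadicCube_self (hh : 0 < h) (m : ℕ) (x : Fin n → ℝ) : x ∈ dyadicCube a h m x :=
  (mem_dyadicCube_iff hh).2 rfl

lemma dyadicCube_eq_of_mem (hh : 0 < h) {m : ℕ} {x y : Fin n → ℝ}
    (hy : y ∈ dyadicCube a h m x) : dyadicCube a h m y = dyadicCube a h m x := by
  rw [dyadicCube, dyadicCube, (mem_dyadicCube_iff hh).1 hy]

lemma dyadicIndex_eq_div (hh : 0 < h) {m m' : ℕ} (hm : m ≤ m') (x : Fin n → ℝ) (i : Fin n) :
    dyadicIndex a h m x i = dyadicIndex a h m' x i / (2 ^ (m' - m) : ℕ) := by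
  obtain ⟨d, rfl⟩ := Nat.exists_eq_add_of_le hm
  rw [dyadicIndex, dyadicIndex, ← Int.floor_div_natCast, Nat.add_sub_cancel_left]
  congr 1
  push_cast
  field_simp
  ring

lemma dyadicCube_subset_of_le (hh : 0 < h) {m m' : ℕ} (hm : m ≤ m') (x : Fin n → ℝ) :
    dyadicCube a h m' x ⊆ dyadicCube a h m x := by
  intro y hy
  rw [mem_dyadicCube_iff hh] at hy ⊢
  funext i
  rw [dyadicIndex_eq_div hh hm, dyadicIndex_eq_div hh hm x, hy]

lemma dyadicCube_zero (hh : 0 < h) {x : Fin n → ℝ} (hx : x ∈ halfOpenCube a h) :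
    dyadicCube a h 0 x = halfOpenCube a h := by
  have hQ : dyadicCube a h 0 a = halfOpenCube a h := by simp [dyadicCube, dyadicIndex]
  rw [← hQ] at hx ⊢
  exact dyadicCube_eq_of_mem hh hx

lemma dyadicCube_subset_halfOpenCube (hh : 0 < h) (m : ℕ) {x : Fin n → ℝ}
    (hx : x ∈ halfOpenCube a h) : dyadicCube a h m x ⊆ halfOpenCube a h :=
  (dyadicCube_subset_of_le hh m.zero_le x).trans (dyadicCube_zero hh hx).le

lemma measureReal_dyadicCube_succ (hh : 0 < h) (m : ℕ) (x : Fin n → ℝ) :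
    volume.real (dyadicCube a h m x) = 2 ^ n * volume.real (dyadicCube a h (m + 1) x) := by
  rw [dyadicCube, dyadicCube, measureReal_halfOpenCube _ (by positivity),
    measureReal_halfOpenCube _ (by positivity), ← mul_pow]
  congr 1
  field_simp
  ring

theorem ae_tendsto_setAverage_dyadicCube {f : (Fin n → ℝ) → ℝ} (hf : LocallyIntegrable f volume)
    (a : Fin n → ℝ) {h : ℝ} (hh : 0 < h) :
    ∀ᵐ x, Tendsto (fun m => ⨍ y in dyadicCube a h m x, f y) atTop (𝓝 (f x)) := by
  -- In the sup metric a dyadic cube is, up to a null set, the closed ball around its centre.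
  filter_upwards [IsUnifLocDoublingMeasure.ae_tendsto_average volume hf 1] with x hx
  have hδ : Tendsto (fun m : ℕ => h / 2 ^ m / 2) atTop (𝓝[>] 0) := by
    refine tendsto_nhdsWithin_iff.2 ⟨?_, Eventually.of_forall fun m => by
      simp only [Set.mem_Ioi]; positivity⟩
    simpa using (tendsto_const_nhds.div_atTop
      (tendsto_pow_atTop_atTop_of_one_lt (one_lt_two : (1 : ℝ) < 2))).div_const 2
  refine (hx (fun m => (fun i => a i + h / 2 ^ m * dyadicIndex a h m x i) + fun _ => h / 2 ^ m / 2)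
    _ hδ (Eventually.of_forall fun m => ?_)).congr fun m => ?_
  · rw [one_mul]
    exact halfOpenCube_subset_closedBall (by positivity) (mem_dyadicCube_self hh m x)
  · rw [dyadicCube, Measure.restrict_congr_set (halfOpenCube_ae_eq_closedBall _ (by positivity))]

end Dyadic

/-- Calderón–Zygmund cubes of `f` at height `t`: the maximal dyadic subcubes of
`halfOpenCube a h` on which the average of `f` exceeds `t`. -/
def czCubes (f : (Fin n → ℝ) → ℝ) (a : Fin n → ℝ) (h t : ℝ) : Set (Set (Fin n → ℝ)) :=
  {D | ∃ x ∈ halfOpenCube a h, ∃ m, D = dyadicCube a h m x ∧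
    t < ⨍ y in D, f y ∧ ∀ j < m, ⨍ y in dyadicCube a h j x, f y ≤ t}

section CalderonZygmund

variable {f : (Fin n → ℝ) → ℝ} {a : Fin n → ℝ} {h t : ℝ}

lemma czCubes_countable : (czCubes f a h t).Countable := by
  refine (Set.countable_range fun p : ℕ × (Fin n → ℤ) =>
    halfOpenCube (fun i => a i + h / 2 ^ p.1 * p.2 i) (h / 2 ^ p.1)).mono ?_
  rintro _ ⟨x, -, m, rfl, -⟩
  exact ⟨(m, dyadicIndex a h m x), rfl⟩

lemma subset_of_mem_czCubes (hh : 0 < h) {D : Set (Fin n → ℝ)} (hD : D ∈ czCubes f a h t) :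
    D ⊆ halfOpenCube a h := by
  obtain ⟨x, hx, m, rfl, -⟩ := hD
  exact dyadicCube_subset_halfOpenCube hh m hx

lemma eq_of_mem_czCubes_of_le (hh : 0 < h) {x x' : Fin n → ℝ} {m m' : ℕ} (hmm' : m ≤ m')
    (hx : t < ⨍ y in dyadicCube a h m x, f y)
    (hx' : ∀ j < m', ⨍ y in dyadicCube a h j x', f y ≤ t)
    (hint : (dyadicCube a h m x ∩ dyadicCube a h m' x').Nonempty) :
    dyadicCube a h m x = dyadicCube a h m' x' := by
  obtain ⟨z, hzx, hzx'⟩ := hint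
  have hzx'' : z ∈ dyadicCube a h m x' := dyadicCube_subset_of_le hh hmm' x' hzx'
  have hsame : dyadicCube a h m x' = dyadicCube a h m x := by
    rw [← dyadicCube_eq_of_mem hh hzx, dyadicCube_eq_of_mem hh hzx'']
  rcases hmm'.lt_or_eq with hlt | rfl
  · exact absurd (hsame ▸ hx' m hlt) hx.not_ge
  · exact hsame.symm

lemma czCubes_pairwiseDisjoint (hh : 0 < h) : (czCubes f a h t).PairwiseDisjoint id := by
  rintro _ ⟨x, -, m, rfl, hx, hxmin⟩ _ ⟨x', -, m', rfl, hx', hx'min⟩ hne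
  rw [Function.onFun, Set.disjoint_iff_inter_eq_empty, ← Set.not_nonempty_iff_eq_empty]
  intro hint
  rcases le_total m m' with hmm' | hm'm
  · exact hne (eq_of_mem_czCubes_of_le hh hmm' hx hx'min hint)
  · exact hne (eq_of_mem_czCubes_of_le hh hm'm hx' hxmin (Set.inter_comm _ _ ▸ hint)).symm

lemma ofReal_mul_tsum_volume_czCubes_le (hf : IntegrableOn f (halfOpenCube a h)) (hf0 : 0 ≤ f)
    (hh : 0 < h) :
    ENNReal.ofReal t * ∑' D : czCubes f a h t, volume (D : Set (Fin n → ℝ)) ≤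
      ∫⁻ x in halfOpenCube a h, ENNReal.ofReal (f x) := by
  have hsub : ∀ D ∈ czCubes f a h t, D ⊆ halfOpenCube a h := fun D hD =>
    subset_of_mem_czCubes hh hD
  calc ENNReal.ofReal t * ∑' D : czCubes f a h t, volume (D : Set (Fin n → ℝ))
      = ∑' D : czCubes f a h t, ENNReal.ofReal t * volume (D : Set (Fin n → ℝ)) :=
        ENNReal.tsum_mul_left.symm
    _ ≤ ∑' D : czCubes f a h t, ∫⁻ x in D, ENNReal.ofReal (f x) := by
        refine ENNReal.tsum_le_tsum fun ⟨D, hD⟩ => ?_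
        obtain ⟨x, -, m, rfl, hx, -⟩ := id hD
        exact ofReal_mul_le_setLIntegral_of_le_setAverage ((hf.mono_set (hsub _ hD)))
          (.of_forall fun y => hf0 y) (volume_halfOpenCube_ne_top _ _) hx.le
    _ = ∫⁻ x in ⋃ D ∈ czCubes f a h t, D, ENNReal.ofReal (f x) :=
        (lintegral_biUnion czCubes_countable (fun D ⟨_, _, _, hD, _⟩ =>
          hD ▸ measurableSet_halfOpenCube _ _) (czCubes_pairwiseDisjoint hh) _).symm
    _ ≤ ∫⁻ x in halfOpenCube a h, ENNReal.ofReal (f x) :=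
        lintegral_mono_set (Set.iUnion₂_subset hsub)

lemma four_mul_tsum_volume_czCubes_le (hf : IntegrableOn f (halfOpenCube a h)) (hf0 : 0 ≤ f)
    (hh : 0 < h) {ε : ℝ} (hε : 0 < ε) (havg : ⨍ x in halfOpenCube a h, f x ≤ ε) :
    4 * ∑' D : czCubes f a h (4 * ε), volume (D : Set (Fin n → ℝ)) ≤ volume (halfOpenCube a h) := by
  have hmass := (ofReal_mul_tsum_volume_czCubes_le (t := 4 * ε) hf hf0 hh).trans
    (setLIntegral_le_ofReal_mul_of_setAverage_le hf (.of_forall hf0)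
      (volume_halfOpenCube_ne_top a h) havg)
  rw [ENNReal.ofReal_mul (by norm_num), ENNReal.ofReal_ofNat, mul_comm 4, mul_assoc] at hmass
  exact (ENNReal.mul_le_mul_iff_right (by simpa using hε) ENNReal.ofReal_ne_top).1 hmass

lemma setAverage_le_of_mem_czCubes (hf : IntegrableOn f (halfOpenCube a h)) (hf0 : 0 ≤ f)
    (hh : 0 < h) (ht : ⨍ x in halfOpenCube a h, f x ≤ t) {D : Set (Fin n → ℝ)}
    (hD : D ∈ czCubes f a h t) : ⨍ x in D, f x ≤ 2 ^ n * t := by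
  obtain ⟨x, hxQ, m, rfl, hx, hmin⟩ := hD
  cases m with
  | zero => exact absurd ht (dyadicCube_zero hh hxQ ▸ hx).not_ge
  | succ j =>
    have hparent := measureReal_mul_setAverage_le_of_subset
      (hf.mono_set (dyadicCube_subset_halfOpenCube hh j hxQ)) (.of_forall fun y => hf0 y)
      (dyadicCube_subset_of_le hh j.le_succ x) (volume_halfOpenCube_ne_top _ _)
    rw [measureReal_dyadicCube_succ hh j x] at hparent
    have hpos : 0 < volume.real (dyadicCube a h (j + 1) x) := by
      rw [dyadicCube, measureReal_halfOpenCube _ (by positivity)]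
      positivity
    refine le_of_mul_le_mul_left (hparent.trans ?_) hpos
    have := mul_le_mul_of_nonneg_left (hmin j j.lt_succ_self) (by positivity :
      (0 : ℝ) ≤ 2 ^ n * volume.real (dyadicCube a h (j + 1) x))
    linarith

lemma ae_le_of_notMem_sUnion_czCubes (hf : LocallyIntegrable f volume) (hh : 0 < h) :
    ∀ᵐ x, x ∈ halfOpenCube a h → x ∉ ⋃₀ czCubes f a h t → f x ≤ t := by
  classical
  filter_upwards [ae_tendsto_setAverage_dyadicCube hf a hh] with x hx hxQ hxS
  refine le_of_tendsto hx (Eventually.of_forall fun m => not_lt.1 fun hm => hxS ?_)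
  have hex : ∃ m, t < ⨍ y in dyadicCube a h m x, f y := ⟨m, hm⟩
  exact ⟨_, ⟨x, hxQ, Nat.find hex, rfl, Nat.find_spec hex, fun j hj =>
    not_lt.1 (Nat.find_min hex hj)⟩, mem_dyadicCube_self hh _ x⟩

end CalderonZygmund

def deviationSet (b : (Fin n → ℝ) → ℝ) (Q : Set (Fin n → ℝ)) (s : ℝ) : Set (Fin n → ℝ) :=
  {x ∈ Q | s ≤ |b x - ⨍ y in Q, b y|}

section JohnNirenberg

variable {b : (Fin n → ℝ) → ℝ} {ε : ℝ}

theorem volume_deviationSet_succ_le (hb : LocallyIntegrable b volume) (hε : 0 < ε)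
    (hbmo : ∀ a h, 0 < h →
      ⨍ x in halfOpenCube a h, |b x - ⨍ y in halfOpenCube a h, b y| ≤ ε)
    {k : ℕ} (ih : ∀ a h, 0 < h →
      volume (deviationSet b (halfOpenCube a h) (k * ((2 ^ n + 1) * (4 * ε)))) ≤
        4⁻¹ ^ k * volume (halfOpenCube a h))
    {a : Fin n → ℝ} {h : ℝ} (hh : 0 < h) :
    volume (deviationSet b (halfOpenCube a h) ((k + 1) * ((2 ^ n + 1) * (4 * ε)))) ≤
      4⁻¹ ^ (k + 1) * volume (halfOpenCube a h) := by
  set Q := halfOpenCube a h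
  set M := (2 ^ n + 1) * (4 * ε)
  set c := ⨍ y in Q, b y
  set f := fun x => |b x - c|
  set S := czCubes f a h (4 * ε)
  have hM : 2 ^ n * (4 * ε) + 4 * ε = M := by ring
  have hf : LocallyIntegrable f volume := hb.abs_sub_const c
  have hf0 : 0 ≤ f := fun x => abs_nonneg _
  have hfQ : IntegrableOn f Q := integrableOn_halfOpenCube hf a h
  have havg : ⨍ x in Q, f x ≤ 4 * ε := (hbmo a h hh).trans (by linarith)
  have hcenter : ∀ D ∈ S, |(⨍ y in D, b y) - c| ≤ 2 ^ n * (4 * ε) := by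
    rintro D hD
    obtain ⟨x, -, m, rfl, -⟩ := id hD
    exact (abs_setAverage_sub_le (integrableOn_halfOpenCube hb _ _)
      (volume_halfOpenCube_ne_zero _ (by positivity)) (volume_halfOpenCube_ne_top _ _) c).trans
      (setAverage_le_of_mem_czCubes hfQ hf0 hh havg hD)
  have hcover : deviationSet b Q ((k + 1) * M) ≤ᵐ[volume]
      ⋃ D ∈ S, deviationSet b D (k * M) := by
    filter_upwards [ae_le_of_notMem_sUnion_czCubes (a := a) (t := 4 * ε) hf hh] with x hx hxdev
    obtain ⟨hxQ, hxb⟩ := hxdev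
    have hM : 4 * ε < (k + 1) * M := by
      have : 0 ≤ (k : ℝ) * M := by positivity
      linarith [show 0 < 2 ^ n * (4 * ε) by positivity]
    obtain ⟨D, hD, hxD⟩ : x ∈ ⋃₀ S := by
      by_contra hxS
      exact (hx hxQ hxS).not_gt (hM.trans_le hxb)
    refine Set.mem_biUnion hD ⟨hxD, ?_⟩
    linarith [hcenter D hD, abs_sub_le (b x) (⨍ y in D, b y) c]
  calc volume (deviationSet b Q ((k + 1) * M))
      ≤ volume (⋃ D ∈ S, deviationSet b D (k * M)) := measure_mono_ae hcover
    _ ≤ ∑' D : S, volume (deviationSet b D (k * M)) := measure_biUnion_le _ czCubes_countable _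
    _ ≤ ∑' D : S, 4⁻¹ ^ k * volume (D : Set (Fin n → ℝ)) := by
        refine ENNReal.tsum_le_tsum fun ⟨D, hD⟩ => ?_
        obtain ⟨x, -, m, rfl, -⟩ := hD
        exact ih _ _ (by positivity)
    _ = 4⁻¹ ^ (k + 1) * (4 * ∑' D : S, volume (D : Set (Fin n → ℝ))) := by
        rw [ENNReal.tsum_mul_left, pow_succ, mul_assoc, ← mul_assoc 4⁻¹,
          ENNReal.inv_mul_cancel (by norm_num) (by norm_num), one_mul]
    _ ≤ 4⁻¹ ^ (k + 1) * volume Q := by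
        gcongr
        exact four_mul_tsum_volume_czCubes_le hfQ hf0 hh hε (hbmo a h hh)

theorem volume_deviationSet_le (hb : LocallyIntegrable b volume) (hε : 0 < ε)
    (hbmo : ∀ a h, 0 < h →
      ⨍ x in halfOpenCube a h, |b x - ⨍ y in halfOpenCube a h, b y| ≤ ε)
    (k : ℕ) {a : Fin n → ℝ} {h : ℝ} (hh : 0 < h) :
    volume (deviationSet b (halfOpenCube a h) (k * ((2 ^ n + 1) * (4 * ε)))) ≤
      4⁻¹ ^ k * volume (halfOpenCube a h) := by
  induction k generalizing a h with
  | zero =>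
    rw [Nat.cast_zero, zero_mul, pow_zero, one_mul]
    exact measure_mono (Set.sep_subset _ _)
  | succ k ih =>
    push_cast
    exact volume_deviationSet_succ_le hb hε hbmo (fun _ _ => ih) hh

theorem lintegral_exp_abs_sub_setAverage_le (hb : LocallyIntegrable b volume) (hε : 0 < ε)
    (hεn : (2 ^ n + 1) * (4 * ε) ≤ 1 / 4)
    (hbmo : ∀ a h, 0 < h →
      ⨍ x in halfOpenCube a h, |b x - ⨍ y in halfOpenCube a h, b y| ≤ ε)
    {a : Fin n → ℝ} {h : ℝ} (hh : 0 < h) :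
    ∫⁻ x in halfOpenCube a h, ENNReal.ofReal (Real.exp |b x - ⨍ y in halfOpenCube a h, b y|) ≤
      2 * volume (halfOpenCube a h) := by
  have hexp : Real.exp ((2 ^ n + 1) * (4 * ε)) ≤ 4 / 3 :=
    (Real.exp_le_exp.2 hεn).trans
      ((Real.exp_bound_div_one_sub_of_interval (by norm_num) (by norm_num)).trans_eq (by norm_num))
  have := lintegral_ofReal_exp_le_two_mul (μ := volume.restrict (halfOpenCube a h))
    (g := fun x => |b x - ⨍ y in halfOpenCube a h, b y|)
    (hb.aestronglyMeasurable.aemeasurable.sub aemeasurable_const).abs.restrict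
    (fun x => abs_nonneg _) (by positivity) hexp fun k => ?_
  · rwa [Measure.restrict_apply_univ] at this
  rw [Measure.restrict_apply' (measurableSet_halfOpenCube a h), Measure.restrict_apply_univ,
    Set.inter_comm]
  exact volume_deviationSet_le hb hε hbmo k hh

end JohnNirenberg

lemma avgR_eq_setAverage {Q : Set (Fin n → ℝ)} (f : (Fin n → ℝ) → ℝ) :
    avgR Q f = ⨍ x in Q, f x := by
  rw [avgR, setAverage_eq, smul_eq_mul, measureReal_def, div_eq_inv_mul]

lemma setAverage_abs_sub_le_of_bmoNorm_le {b : (Fin n → ℝ) → ℝ} {ε : ℝ}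
    (hb : LocallyIntegrable b volume) (hε : 0 ≤ ε) (hbmo : bmoNorm n b ≤ ENNReal.ofReal ε)
    {Q : Set (Fin n → ℝ)} (hQ : IsCube Q) :
    ⨍ x in Q, |b x - ⨍ y in Q, b y| ≤ ε := by
  have hQb := (le_iSup₂ (f := fun Q (_ : IsCube Q) =>
    (∫⁻ x in Q, (‖b x - avgR Q b‖₊ : ℝ≥0∞)) / volume Q) Q hQ).trans hbmo
  obtain ⟨a, h, -, rfl⟩ := hQ
  have hbQ : IntegrableOn b (Set.Icc a (a + fun _ => h)) :=
    hb.integrableOn_isCompact isCompact_Icc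
  rw [← ENNReal.ofReal_le_ofReal_iff hε, ofReal_setAverage
    (f := fun x => |b x - ⨍ y in Set.Icc a (a + fun _ => h), b y|)
    (hbQ.sub (integrableOn_const measure_Icc_lt_top.ne)).abs (.of_forall fun _ => abs_nonneg _)]
  simpa only [avgR_eq_setAverage, ← Real.norm_eq_abs, ofReal_norm, enorm_eq_nnnorm] using hQb

end Cubes

/-- **Exponential John–Nirenberg inequality.** There is `ε_n > 0` such that any
real-valued locally integrable `b` with `‖b‖_{BMO} ≤ ε_n` satisfies
`⨍_Q e^{|b - ⟨b⟩_Q|} ≤ 2` on every cube `Q`. -/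
theorem exp_john_nirenberg (n : ℕ) :
    ∃ ε : ℝ, 0 < ε ∧
      ∀ b : (Fin n → ℝ) → ℝ, MeasureTheory.LocallyIntegrable b volume →
        bmoNorm n b ≤ ENNReal.ofReal ε →
        ∀ Q : Set (Fin n → ℝ), IsCube Q →
          (avgL Q fun x => ENNReal.ofReal (Real.exp |b x - avgR Q b|)) ≤ 2 := by
  refine ⟨(16 * (2 ^ n + 1))⁻¹, by positivity, fun b hb hbmo Q hQ => ?_⟩
  have hεn : (2 ^ n + 1) * (4 * (16 * (2 ^ n + 1) : ℝ)⁻¹) ≤ 1 / 4 := by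
    field_simp
    norm_num
  have hosc : ∀ a h, 0 < h → ⨍ x in halfOpenCube a h, |b x - ⨍ y in halfOpenCube a h, b y| ≤
      (16 * (2 ^ n + 1))⁻¹ := fun a h hh => by
    rw [Measure.restrict_congr_set (halfOpenCube_ae_eq_Icc a h)]
    exact setAverage_abs_sub_le_of_bmoNorm_le hb (by positivity) hbmo ⟨a, h, hh, rfl⟩
  obtain ⟨a, h, hh, rfl⟩ := hQ
  have key := lintegral_exp_abs_sub_setAverage_le (a := a) hb (by positivity) hεn hosc hh
  rw [Measure.restrict_congr_set (halfOpenCube_ae_eq_Icc a h),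
    measure_congr (halfOpenCube_ae_eq_Icc a h)] at key
  rw [avgL, avgR_eq_setAverage]
  exact ENNReal.div_le_of_le_mul key
end
end

section
/- There is a constant $\varepsilon_n>0$, depending only on the dimension $n$, such that if $b$ is a real-valued locally integrable function on $\mathbb{R}^n$ with $\|b\|_{BMO}<\infty$ and $s\in\mathbb{R}$ satisfies $|s|\,\|b\|_{BMO}\le \varepsilon_n$, then for every cube $Q\subset\mathbb{R}^n$, $\frac{1}{|Q|}\int_Q e^{s(b-\langle b\rangle_Q)}\,dx\le 2$. -/
open MeasureTheory ENNReal

noncomputable section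

/-!
The stopping-time form of the John–Nirenberg argument, run along the dyadic subcubes of a cube.
Let `A_m x` be the average of `b` over the generation-`m` dyadic subcube containing `x`, and let
`K = 1 / (10 s) ≥ 4 · 2ⁿ ‖b‖_BMO`. By induction on `m`, on every cube with `⟨b⟩ ≤ c + K`,
`∫ e^{s (A_m - c)} ≤ (10/9) |Q| + 16 / (7K) ∫ |b - c|`. Children whose average stays below `c + K`
are handled with the same `c`; a child whose average exceeds `c + K` (by at most
`2ⁿ ‖b‖_BMO ≤ K / 4`) restarts from its own average, losing a factor `e^{5sK/4} ≤ 8/7`, which is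
paid for by Chebyshev: `K |Q'| ≤ ∫_{Q'} |b - c|`. With `c = ⟨b⟩_Q` this gives
`∫_Q e^{s (A_m - ⟨b⟩_Q)} ≤ 2 |Q|`; then `A_m → b` a.e. (Lebesgue differentiation) and Fatou give
the claim for `s ≥ 0`, and `s < 0` is the case `-s` for `-b`.
-/

namespace JohnNirenberg

open Set Filter Topology Function Metric

variable {n : ℕ}

/-- Half-open, so that the `2 ^ n` children of a cube partition it; it differs from the closed
cube `Icc z (z + fun _ => r)` of `IsCube` by a null set. -/
def cube (z : Fin n → ℝ) (r : ℝ) : Set (Fin n → ℝ) :=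
  univ.pi fun i => Ico (z i) (z i + r)

def childCorner (z : Fin n → ℝ) (r : ℝ) (t : Fin n → Bool) : Fin n → ℝ :=
  fun i => z i + if t i then r / 2 else 0

def childIndex (z : Fin n → ℝ) (r : ℝ) (x : Fin n → ℝ) : Fin n → Bool :=
  fun i => decide (z i + r / 2 ≤ x i)

lemma mem_cube {z x : Fin n → ℝ} {r : ℝ} : x ∈ cube z r ↔ ∀ i, z i ≤ x i ∧ x i < z i + r := by
  simp [cube]

lemma measurableSet_cube (z : Fin n → ℝ) (r : ℝ) : MeasurableSet (cube z r) :=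
  .univ_pi fun _ => measurableSet_Ico

lemma cube_subset_Icc (z : Fin n → ℝ) (r : ℝ) : cube z r ⊆ Icc z (z + fun _ => r) := by
  rw [cube, ← pi_univ_Icc]
  exact pi_mono fun _ _ => Ico_subset_Icc_self

lemma volume_cube (z : Fin n → ℝ) {r : ℝ} (hr : 0 ≤ r) :
    volume (cube z r) = ENNReal.ofReal (r ^ n) := by
  simp [cube, volume_pi_pi, Real.volume_Ico, ← ENNReal.ofReal_pow hr]

lemma volume_Icc_add_const (z : Fin n → ℝ) {r : ℝ} (hr : 0 ≤ r) :
    volume (Icc z (z + fun _ => r)) = ENNReal.ofReal (r ^ n) := by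
  simp [← pi_univ_Icc, volume_pi_pi, Real.volume_Icc, ← ENNReal.ofReal_pow hr]

lemma cube_ae_eq_Icc (z : Fin n → ℝ) {r : ℝ} (hr : 0 ≤ r) :
    cube z r =ᵐ[volume] Icc z (z + fun _ => r) :=
  ae_eq_of_subset_of_measure_ge (cube_subset_Icc z r)
    (by rw [volume_cube z hr, volume_Icc_add_const z hr]) (measurableSet_cube z r).nullMeasurableSet
    (by rw [volume_Icc_add_const z hr]; exact ENNReal.ofReal_ne_top)

lemma mem_cube_childCorner_iff {z x : Fin n → ℝ} {r : ℝ} {t : Fin n → Bool} :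
    x ∈ cube (childCorner z r t) (r / 2) ↔ x ∈ cube z r ∧ childIndex z r x = t := by
  simp only [mem_cube, childCorner, childIndex, funext_iff, ← forall_and]
  refine forall_congr' fun i => ?_
  cases t i <;> simp only [Bool.false_eq_true, ↓reduceIte, decide_eq_true_eq,
    decide_eq_false_iff_not, not_le] <;> constructor <;> intro h <;> constructor <;>
    (try constructor) <;> linarith [h.1, h.2]

lemma cube_childCorner_subset (z : Fin n → ℝ) (r : ℝ) (t : Fin n → Bool) :
    cube (childCorner z r t) (r / 2) ⊆ cube z r :=
  fun _ hx => (mem_cube_childCorner_iff.1 hx).1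

lemma cube_eq_iUnion_childCorner (z : Fin n → ℝ) (r : ℝ) :
    cube z r = ⋃ t, cube (childCorner z r t) (r / 2) := by
  ext x
  simp only [mem_iUnion, mem_cube_childCorner_iff, exists_and_left, exists_eq', and_true]

lemma pairwise_disjoint_cube_childCorner (z : Fin n → ℝ) (r : ℝ) :
    Pairwise (Disjoint on fun t => cube (childCorner z r t) (r / 2)) := by
  refine fun t t' htt' => disjoint_left.2 fun x hx hx' => htt' ?_
  rw [← (mem_cube_childCorner_iff.1 hx).2, ← (mem_cube_childCorner_iff.1 hx').2]

lemma lintegral_cube_eq_sum_childCorner (z : Fin n → ℝ) (r : ℝ) (f : (Fin n → ℝ) → ℝ≥0∞) :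
    ∫⁻ x in cube z r, f x = ∑ t, ∫⁻ x in cube (childCorner z r t) (r / 2), f x := by
  rw [cube_eq_iUnion_childCorner, lintegral_iUnion (fun _ => measurableSet_cube _ _)
    (pairwise_disjoint_cube_childCorner z r), tsum_fintype]

lemma integral_cube_eq_sum_childCorner {z : Fin n → ℝ} {r : ℝ} {f : (Fin n → ℝ) → ℝ}
    (hf : IntegrableOn f (cube z r)) :
    ∫ x in cube z r, f x = ∑ t, ∫ x in cube (childCorner z r t) (r / 2), f x := by
  rw [cube_eq_iUnion_childCorner] at hf ⊢
  rw [integral_iUnion (fun _ => measurableSet_cube _ _) (pairwise_disjoint_cube_childCorner z r) hf,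
    tsum_fintype]

lemma measurable_childIndex (z : Fin n → ℝ) (r : ℝ) : Measurable (childIndex z r) :=
  measurable_pi_lambda (childIndex z r) fun i => measurable_to_bool <| by
    have : (childIndex z r · i) ⁻¹' {true} = {x | z i + r / 2 ≤ x i} := by ext; simp [childIndex]
    exact this ▸ measurableSet_le measurable_const (measurable_pi_apply i)

def cubeAvg (b : (Fin n → ℝ) → ℝ) (z : Fin n → ℝ) (r : ℝ) : ℝ :=
  (∫ x in cube z r, b x) / r ^ n

/-- The average of `b` over the generation-`m` dyadic subcube of `cube z r` containing `x`. -/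
def dyadicAvg (b : (Fin n → ℝ) → ℝ) : ℕ → (Fin n → ℝ) → ℝ → (Fin n → ℝ) → ℝ
  | 0, z, r, _ => cubeAvg b z r
  | m + 1, z, r, x => dyadicAvg b m (childCorner z r (childIndex z r x)) (r / 2) x

lemma measurable_dyadicAvg (b : (Fin n → ℝ) → ℝ) (m : ℕ) :
    ∀ (z : Fin n → ℝ) (r : ℝ), Measurable (dyadicAvg b m z r) := by
  induction m with
  | zero => exact fun _ _ => measurable_const
  | succ m ih =>
    intro z r
    exact (measurable_from_prod_countable_left (f := fun p : (Fin n → ℝ) × (Fin n → Bool) =>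
      dyadicAvg b m (childCorner z r p.2) (r / 2) p.1) fun t => ih (childCorner z r t) (r / 2)).comp
      (measurable_id.prodMk (measurable_childIndex z r))

lemma exists_dyadicAvg_eq_cubeAvg (b : (Fin n → ℝ) → ℝ) (m : ℕ) :
    ∀ {z x : Fin n → ℝ} {r : ℝ}, x ∈ cube z r →
      ∃ z', x ∈ cube z' (r / 2 ^ m) ∧ dyadicAvg b m z r x = cubeAvg b z' (r / 2 ^ m) := by
  induction m with
  | zero => exact fun {z} _ _ hx => ⟨z, by simpa using hx, by simp [dyadicAvg]⟩
  | succ m ih =>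
    intro z x r hx
    obtain ⟨z', hxz', hz'⟩ := ih (mem_cube_childCorner_iff.2 ⟨hx, rfl⟩)
    rw [div_div, ← pow_succ'] at hxz' hz'
    exact ⟨z', hxz', hz'⟩

lemma Icc_eq_closedBall (z : Fin n → ℝ) {r : ℝ} (hr : 0 ≤ r) :
    Icc z (z + fun _ => r) = closedBall (z + fun _ => r / 2) (r / 2) := by
  rw [closedBall_pi _ (by positivity), ← pi_univ_Icc]
  refine pi_congr rfl fun i _ => ?_
  rw [Real.closedBall_eq_Icc]
  simp only [Pi.add_apply]
  ring_nf

lemma cubeAvg_eq_setAverage_closedBall (b : (Fin n → ℝ) → ℝ) (z : Fin n → ℝ) {r : ℝ}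
    (hr : 0 < r) : cubeAvg b z r = ⨍ y in closedBall (z + fun _ => r / 2) (r / 2), b y := by
  rw [← Icc_eq_closedBall z hr.le, setAverage_eq, ← setIntegral_congr_set (cube_ae_eq_Icc z hr.le),
    measureReal_def, volume_Icc_add_const z hr.le, ENNReal.toReal_ofReal (by positivity), cubeAvg,
    smul_eq_mul, inv_mul_eq_div]

lemma ae_tendsto_dyadicAvg {b : (Fin n → ℝ) → ℝ} (hb : LocallyIntegrable b volume)
    (z : Fin n → ℝ) {r : ℝ} (hr : 0 < r) :
    ∀ᵐ x, x ∈ cube z r → Tendsto (fun m => dyadicAvg b m z r x) atTop (𝓝 (b x)) := by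
  filter_upwards [IsUnifLocDoublingMeasure.ae_tendsto_average (μ := volume) hb 1] with x hx hxQ
  choose Z hxZ hZ using fun m => exists_dyadicAvg_eq_cubeAvg b m hxQ
  have hδ : Tendsto (fun m : ℕ => r / 2 ^ m / 2) atTop (𝓝[>] 0) := by
    refine tendsto_nhdsWithin_iff.2 ⟨?_, .of_forall fun m => mem_Ioi.2 (by positivity)⟩
    simpa using ((tendsto_const_nhds (x := r)).div_atTop
      (tendsto_pow_atTop_atTop_of_one_lt (one_lt_two (α := ℝ)))).div_const 2
  refine (hx (fun m => Z m + fun _ => r / 2 ^ m / 2) _ hδ (.of_forall fun m => ?_)).congr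
    fun m => ?_
  · rw [one_mul, ← Icc_eq_closedBall _ (by positivity)]
    exact cube_subset_Icc _ _ (hxZ m)
  · rw [hZ m, cubeAvg_eq_setAverage_closedBall b _ (by positivity)]

section Estimates

variable {b : (Fin n → ℝ) → ℝ}

lemma integrableOn_cube (hb : LocallyIntegrable b volume) (z : Fin n → ℝ) (r : ℝ) :
    IntegrableOn b (cube z r) :=
  (hb.integrableOn_isCompact isCompact_Icc).mono_set (cube_subset_Icc z r)

lemma integrableOn_cube_sub (hb : LocallyIntegrable b volume) (z : Fin n → ℝ) {r : ℝ}
    (hr : 0 ≤ r) (c : ℝ) : IntegrableOn (fun x => b x - c) (cube z r) :=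
  (integrableOn_cube hb z r).sub (integrableOn_const (by simp [volume_cube z hr]))

lemma integral_cube_sub (hb : LocallyIntegrable b volume) (z : Fin n → ℝ) {r : ℝ} (hr : 0 < r)
    (c : ℝ) : ∫ x in cube z r, (b x - c) = (cubeAvg b z r - c) * r ^ n := by
  rw [integral_sub (integrableOn_cube hb z r) (integrableOn_const (by simp [volume_cube z hr.le])),
    setIntegral_const, measureReal_def, volume_cube z hr.le, ENNReal.toReal_ofReal (by positivity),
    cubeAvg, sub_mul, div_mul_cancel₀ _ (by positivity), smul_eq_mul, mul_comm]

lemma cubeAvg_sub_mul_le_integral_abs (hb : LocallyIntegrable b volume) (z : Fin n → ℝ) {r : ℝ}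
    (hr : 0 < r) (c : ℝ) : (cubeAvg b z r - c) * r ^ n ≤ ∫ x in cube z r, |b x - c| := by
  rw [← integral_cube_sub hb z hr]
  exact integral_mono (integrableOn_cube_sub hb z hr.le c) (integrableOn_cube_sub hb z hr.le c).abs
    fun _ => le_abs_self _

lemma integral_abs_sub_nonneg (z : Fin n → ℝ) (r c : ℝ) : 0 ≤ ∫ x in cube z r, |b x - c| :=
  setIntegral_nonneg (measurableSet_cube z r) fun _ _ => abs_nonneg _

lemma cubeAvg_neg (z : Fin n → ℝ) (r : ℝ) : cubeAvg (-b) z r = -cubeAvg b z r := by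
  simp only [cubeAvg, Pi.neg_apply, integral_neg, neg_div]

def OscBound (b : (Fin n → ℝ) → ℝ) (B : ℝ) : Prop :=
  ∀ (z : Fin n → ℝ) (r : ℝ), 0 < r → ∫ x in cube z r, |b x - cubeAvg b z r| ≤ B * r ^ n

lemma OscBound.nonneg {B : ℝ} (hB : OscBound b B) : 0 ≤ B := by
  simpa using (integral_abs_sub_nonneg 0 1 _).trans (hB 0 1 one_pos)

lemma OscBound.neg {B : ℝ} (hB : OscBound b B) : OscBound (-b) B := by
  intro z r hr
  simp_rw [cubeAvg_neg, Pi.neg_apply, neg_sub_neg, abs_sub_comm (cubeAvg b z r)]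
  exact hB z r hr

lemma OscBound.cubeAvg_childCorner_sub_le {B : ℝ} (hB : OscBound b B)
    (hb : LocallyIntegrable b volume) (z : Fin n → ℝ) {r : ℝ} (hr : 0 < r) (t : Fin n → Bool) :
    cubeAvg b (childCorner z r t) (r / 2) - cubeAvg b z r ≤ 2 ^ n * B := by
  have h := calc
    (cubeAvg b (childCorner z r t) (r / 2) - cubeAvg b z r) * (r / 2) ^ n
      ≤ ∫ x in cube (childCorner z r t) (r / 2), |b x - cubeAvg b z r| :=
        cubeAvg_sub_mul_le_integral_abs hb _ (half_pos hr) _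
    _ ≤ ∫ x in cube z r, |b x - cubeAvg b z r| :=
        setIntegral_mono_set (integrableOn_cube_sub hb z hr.le _).abs
          (.of_forall fun _ => abs_nonneg _) (.of_forall (cube_childCorner_subset z r t))
    _ ≤ B * r ^ n := hB z r hr
  rw [div_pow, mul_div_assoc', div_le_iff₀ (by positivity)] at h
  exact le_of_mul_le_mul_right (by linarith) (pow_pos hr n)

/-- `10 / 9 ≥ e ^ (1 / 10)`; the second term pays, by Chebyshev, for the factor `(8 / 7) * 2` lost
on each stopping cube. -/
def expMajorant (b : (Fin n → ℝ) → ℝ) (K : ℝ) (z : Fin n → ℝ) (r c : ℝ) : ℝ :=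
  10 / 9 * r ^ n + 16 / (7 * K) * ∫ x in cube z r, |b x - c|

lemma expMajorant_nonneg {K : ℝ} (hK : 0 < K) (z : Fin n → ℝ) {r : ℝ} (hr : 0 < r) (c : ℝ) :
    0 ≤ expMajorant b K z r c := by
  have := integral_abs_sub_nonneg (b := b) z r c
  unfold expMajorant
  positivity

lemma sum_expMajorant_childCorner (hb : LocallyIntegrable b volume) (K : ℝ) (z : Fin n → ℝ)
    {r : ℝ} (hr : 0 < r) (c : ℝ) :
    ∑ t, expMajorant b K (childCorner z r t) (r / 2) c = expMajorant b K z r c := by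
  rw [expMajorant, integral_cube_eq_sum_childCorner (integrableOn_cube_sub hb z hr.le c).abs,
    Finset.mul_sum]
  simp only [expMajorant, Finset.sum_add_distrib, Finset.sum_const, Finset.card_univ,
    Fintype.card_fun, Fintype.card_bool, Fintype.card_fin, nsmul_eq_mul, div_pow]
  congr 1
  push_cast
  field_simp

lemma expMajorant_cubeAvg_le {K B : ℝ} (hK : 0 < K) (hBK : 4 * 2 ^ n * B ≤ K) (hB : OscBound b B)
    (z : Fin n → ℝ) {r : ℝ} (hr : 0 < r) : expMajorant b K z r (cubeAvg b z r) ≤ 2 * r ^ n := by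
  have hB0 := hB.nonneg
  have hcoef : 16 / (7 * K) * B ≤ 4 / 7 := by
    rw [div_mul_eq_mul_div, div_le_iff₀ (by positivity)]
    nlinarith [one_le_pow₀ (M₀ := ℝ) (n := n) one_le_two]
  calc expMajorant b K z r (cubeAvg b z r)
      ≤ 10 / 9 * r ^ n + 16 / (7 * K) * (B * r ^ n) := by
        unfold expMajorant; gcongr; exact hB z r hr
    _ ≤ 10 / 9 * r ^ n + 4 / 7 * r ^ n := by rw [← mul_assoc]; gcongr
    _ ≤ 2 * r ^ n := by nlinarith [pow_pos hr n]

lemma exp_le_one_div_one_sub_of_le {x y : ℝ} (hxy : x ≤ y) (hy : 0 ≤ y) (hy1 : y < 1) :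
    Real.exp x ≤ 1 / (1 - y) :=
  (Real.exp_le_exp.2 hxy).trans (Real.exp_bound_div_one_sub_of_interval hy hy1)

variable {s K B : ℝ}

lemma lintegral_exp_dyadicAvg_le_of_le_add (hb : LocallyIntegrable b volume) (hs : 0 ≤ s)
    (hK : 0 < K) (hsK : s * K ≤ 1 / 10) (hBK : 4 * 2 ^ n * B ≤ K) (hB : OscBound b B) {m : ℕ}
    (ih : ∀ (z : Fin n → ℝ) (r c : ℝ), 0 < r → cubeAvg b z r ≤ c + K →
      ∫⁻ x in cube z r, ENNReal.ofReal (Real.exp (s * (dyadicAvg b m z r x - c)))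
        ≤ ENNReal.ofReal (expMajorant b K z r c))
    {z : Fin n → ℝ} {r c : ℝ} (hr : 0 < r) (hc : cubeAvg b z r ≤ c + 5 / 4 * K) :
    ∫⁻ x in cube z r, ENNReal.ofReal (Real.exp (s * (dyadicAvg b m z r x - c)))
      ≤ ENNReal.ofReal (expMajorant b K z r c) := by
  rcases le_or_gt (cubeAvg b z r) (c + K) with hcK | hstop
  · exact ih z r c hr hcK
  set a := cubeAvg b z r
  have hexp : Real.exp (s * (a - c)) ≤ 8 / 7 :=
    (exp_le_one_div_one_sub_of_le (by nlinarith) (by norm_num) (by norm_num)).trans_eq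
      (by norm_num : (1 : ℝ) / (1 - 1 / 8) = 8 / 7)
  have hcheb : K * r ^ n ≤ ∫ x in cube z r, |b x - c| :=
    (mul_le_mul_of_nonneg_right (by linarith) (by positivity)).trans
      (cubeAvg_sub_mul_le_integral_abs hb z hr c)
  calc ∫⁻ x in cube z r, ENNReal.ofReal (Real.exp (s * (dyadicAvg b m z r x - c)))
      = ENNReal.ofReal (Real.exp (s * (a - c))) *
          ∫⁻ x in cube z r, ENNReal.ofReal (Real.exp (s * (dyadicAvg b m z r x - a))) := by
        rw [← lintegral_const_mul' _ _ ENNReal.ofReal_ne_top]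
        refine lintegral_congr fun x => ?_
        rw [← ENNReal.ofReal_mul (Real.exp_pos _).le, ← Real.exp_add]
        ring_nf
    _ ≤ ENNReal.ofReal (8 / 7) * ENNReal.ofReal (2 * r ^ n) := by
        gcongr
        exact (ih z r a hr (by linarith)).trans
          (ENNReal.ofReal_le_ofReal (expMajorant_cubeAvg_le hK hBK hB z hr))
    _ ≤ ENNReal.ofReal (expMajorant b K z r c) := by
        rw [← ENNReal.ofReal_mul (by norm_num)]
        refine ENNReal.ofReal_le_ofReal ?_
        have hK' : 16 / (7 * K) * (K * r ^ n) = 16 / 7 * r ^ n := by field_simp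
        unfold expMajorant
        linarith [mul_le_mul_of_nonneg_left hcheb (by positivity : (0 : ℝ) ≤ 16 / (7 * K)),
          pow_pos hr n]

theorem lintegral_exp_dyadicAvg_le (hb : LocallyIntegrable b volume) (hs : 0 ≤ s)
    (hK : 0 < K) (hsK : s * K ≤ 1 / 10) (hBK : 4 * 2 ^ n * B ≤ K) (hB : OscBound b B) (m : ℕ) :
    ∀ (z : Fin n → ℝ) (r c : ℝ), 0 < r → cubeAvg b z r ≤ c + K →
      ∫⁻ x in cube z r, ENNReal.ofReal (Real.exp (s * (dyadicAvg b m z r x - c)))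
        ≤ ENNReal.ofReal (expMajorant b K z r c) := by
  induction m with
  | zero =>
    intro z r c hr hc
    have hexp : Real.exp (s * (cubeAvg b z r - c)) ≤ 10 / 9 :=
      (exp_le_one_div_one_sub_of_le (by nlinarith) (by norm_num) (by norm_num)).trans_eq
        (by norm_num : (1 : ℝ) / (1 - 1 / 10) = 10 / 9)
    simp only [dyadicAvg]
    rw [setLIntegral_const, volume_cube z hr.le, ← ENNReal.ofReal_mul (Real.exp_pos _).le]
    refine ENNReal.ofReal_le_ofReal ?_
    have := integral_abs_sub_nonneg (b := b) z r c
    unfold expMajorant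
    nlinarith [pow_pos hr n, (by positivity : (0 : ℝ) ≤ 16 / (7 * K))]
  | succ m ih =>
    intro z r c hr hc
    calc ∫⁻ x in cube z r, ENNReal.ofReal (Real.exp (s * (dyadicAvg b (m + 1) z r x - c)))
        = ∑ t, ∫⁻ x in cube (childCorner z r t) (r / 2),
            ENNReal.ofReal (Real.exp (s * (dyadicAvg b m (childCorner z r t) (r / 2) x - c))) := by
          rw [lintegral_cube_eq_sum_childCorner]
          refine Finset.sum_congr rfl fun t _ =>
            setLIntegral_congr_fun (measurableSet_cube _ _) fun x hx => ?_
          rw [dyadicAvg, (mem_cube_childCorner_iff.1 hx).2]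
      _ ≤ ∑ t, ENNReal.ofReal (expMajorant b K (childCorner z r t) (r / 2) c) :=
          Finset.sum_le_sum fun t _ =>
            lintegral_exp_dyadicAvg_le_of_le_add hb hs hK hsK hBK hB ih (half_pos hr)
              (by linarith [hB.cubeAvg_childCorner_sub_le hb z hr t])
      _ = ENNReal.ofReal (expMajorant b K z r c) := by
          rw [← ENNReal.ofReal_sum_of_nonneg fun t _ => expMajorant_nonneg hK _ (half_pos hr) c,
            sum_expMajorant_childCorner hb K z hr c]

theorem lintegral_exp_sub_cubeAvg_le_of_nonneg (hb : LocallyIntegrable b volume) (hs : 0 ≤ s)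
    (hK : 0 < K) (hsK : s * K ≤ 1 / 10) (hBK : 4 * 2 ^ n * B ≤ K) (hB : OscBound b B)
    (z : Fin n → ℝ) {r : ℝ} (hr : 0 < r) :
    ∫⁻ x in cube z r, ENNReal.ofReal (Real.exp (s * (b x - cubeAvg b z r)))
      ≤ ENNReal.ofReal (2 * r ^ n) := by
  set F : ℝ → ℝ≥0∞ := fun y => ENNReal.ofReal (Real.exp (s * (y - cubeAvg b z r)))
  have hF : Continuous F := ENNReal.continuous_ofReal.comp (by fun_prop)
  have hlim : ∀ᵐ x ∂volume.restrict (cube z r),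
      Tendsto (fun m => F (dyadicAvg b m z r x)) atTop (𝓝 (F (b x))) := by
    filter_upwards [(ae_restrict_iff' (measurableSet_cube z r)).2 (ae_tendsto_dyadicAvg hb z hr)]
      with x hx using (hF.tendsto _).comp hx
  calc ∫⁻ x in cube z r, F (b x)
      = ∫⁻ x in cube z r, liminf (fun m => F (dyadicAvg b m z r x)) atTop :=
        lintegral_congr_ae (hlim.mono fun _ hx => hx.liminf_eq.symm)
    _ ≤ liminf (fun m => ∫⁻ x in cube z r, F (dyadicAvg b m z r x)) atTop :=
        lintegral_liminf_le' fun m =>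
          (hF.measurable.comp (measurable_dyadicAvg b m z r)).aemeasurable
    _ ≤ ENNReal.ofReal (2 * r ^ n) :=
        liminf_le_of_frequently_le' <| .of_forall fun m =>
          (lintegral_exp_dyadicAvg_le hb hs hK hsK hBK hB m z r _ hr (by linarith)).trans
            (ENNReal.ofReal_le_ofReal (expMajorant_cubeAvg_le hK hBK hB z hr))

theorem lintegral_exp_sub_cubeAvg_le (hb : LocallyIntegrable b volume) (hK : 0 < K)
    (hsK : |s| * K ≤ 1 / 10) (hBK : 4 * 2 ^ n * B ≤ K) (hB : OscBound b B)
    (z : Fin n → ℝ) {r : ℝ} (hr : 0 < r) :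
    ∫⁻ x in cube z r, ENNReal.ofReal (Real.exp (s * (b x - cubeAvg b z r)))
      ≤ ENNReal.ofReal (2 * r ^ n) := by
  rcases le_total 0 s with hs | hs
  · exact lintegral_exp_sub_cubeAvg_le_of_nonneg hb hs hK (by rwa [abs_of_nonneg hs] at hsK)
      hBK hB z hr
  · have := lintegral_exp_sub_cubeAvg_le_of_nonneg hb.neg (neg_nonneg.2 hs) hK
      (by rwa [abs_of_nonpos hs] at hsK) hBK hB.neg z hr
    simpa only [cubeAvg_neg, Pi.neg_apply, neg_sub_neg, ← neg_sub (b _), mul_neg, neg_mul,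
      neg_neg] using this

end Estimates

lemma avgR_Icc_eq_cubeAvg (b : (Fin n → ℝ) → ℝ) (z : Fin n → ℝ) {r : ℝ} (hr : 0 < r) :
    avgR (Icc z (z + fun _ => r)) b = cubeAvg b z r := by
  rw [avgR, volume_Icc_add_const z hr.le, ENNReal.toReal_ofReal (by positivity),
    ← setIntegral_congr_set (cube_ae_eq_Icc z hr.le), cubeAvg]

lemma avgL_Icc_eq (f : (Fin n → ℝ) → ℝ≥0∞) (z : Fin n → ℝ) {r : ℝ} (hr : 0 < r) :
    avgL (Icc z (z + fun _ => r)) f = (∫⁻ x in cube z r, f x) / ENNReal.ofReal (r ^ n) := by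
  rw [avgL, setLIntegral_congr (cube_ae_eq_Icc z hr.le).symm, volume_Icc_add_const z hr.le]

lemma oscBound_toReal_bmoNorm {b : (Fin n → ℝ) → ℝ} (hb : LocallyIntegrable b volume)
    (hbmo : bmoNorm n b ≠ ⊤) : OscBound b (bmoNorm n b).toReal := by
  intro z r hr
  set Q := Icc z (z + fun _ => r)
  have hQ : (∫⁻ x in Q, (‖b x - avgR Q b‖₊ : ℝ≥0∞)) / volume Q ≤ bmoNorm n b :=
    le_iSup₂ (f := fun Q (_ : IsCube Q) => (∫⁻ x in Q, (‖b x - avgR Q b‖₊ : ℝ≥0∞)) / volume Q)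
      Q ⟨z, r, hr, rfl⟩
  rw [avgR_Icc_eq_cubeAvg b z hr, setLIntegral_congr (cube_ae_eq_Icc z hr.le).symm,
    volume_Icc_add_const z hr.le, ENNReal.div_le_iff (by simp [hr]) ENNReal.ofReal_ne_top] at hQ
  calc ∫ x in cube z r, |b x - cubeAvg b z r|
      = (∫⁻ x in cube z r, (‖b x - cubeAvg b z r‖₊ : ℝ≥0∞)).toReal :=
        integral_norm_eq_lintegral_enorm (integrableOn_cube_sub hb z hr.le _).aestronglyMeasurable
    _ ≤ (bmoNorm n b * ENNReal.ofReal (r ^ n)).toReal :=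
        ENNReal.toReal_mono (ENNReal.mul_ne_top hbmo ENNReal.ofReal_ne_top) hQ
    _ = (bmoNorm n b).toReal * r ^ n := by
        rw [ENNReal.toReal_mul, ENNReal.toReal_ofReal (by positivity)]

theorem avgL_exp_sub_avgR_le_two {b : (Fin n → ℝ) → ℝ} {s K B : ℝ}
    (hb : LocallyIntegrable b volume) (hK : 0 < K) (hsK : |s| * K ≤ 1 / 10)
    (hBK : 4 * 2 ^ n * B ≤ K) (hB : OscBound b B) {Q : Set (Fin n → ℝ)} (hQ : IsCube Q) :
    avgL Q (fun x => ENNReal.ofReal (Real.exp (s * (b x - avgR Q b)))) ≤ 2 := by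
  obtain ⟨z, r, hr, rfl⟩ := hQ
  rw [avgL_Icc_eq _ z hr, avgR_Icc_eq_cubeAvg b z hr,
    ENNReal.div_le_iff (by simp [hr]) ENNReal.ofReal_ne_top, ← ENNReal.ofReal_ofNat 2,
    ← ENNReal.ofReal_mul zero_le_two]
  exact lintegral_exp_sub_cubeAvg_le hb hK hsK hBK hB z hr

end JohnNirenberg

/-- There is `ε_n > 0` such that for any real-valued locally integrable `b`
with `‖b‖_{BMO} < ∞` and any `s ∈ ℝ` with `|s| ‖b‖_{BMO} ≤ ε_n`, one has
`⨍_Q e^{s(b - ⟨b⟩_Q)} ≤ 2` on every cube `Q`. -/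
theorem exp_john_nirenberg_signed (n : ℕ) :
    ∃ ε : ℝ, 0 < ε ∧
      ∀ b : (Fin n → ℝ) → ℝ, MeasureTheory.LocallyIntegrable b volume →
        bmoNorm n b ≠ ⊤ →
        ∀ s : ℝ, ENNReal.ofReal |s| * bmoNorm n b ≤ ENNReal.ofReal ε →
          ∀ Q : Set (Fin n → ℝ), IsCube Q →
            (avgL Q fun x => ENNReal.ofReal (Real.exp (s * (b x - avgR Q b)))) ≤ 2 := by
  refine ⟨1 / (40 * 2 ^ n), by positivity, fun b hb hbmo s hsb Q hQ => ?_⟩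
  set B := (bmoNorm n b).toReal
  have hB : JohnNirenberg.OscBound b B := JohnNirenberg.oscBound_toReal_bmoNorm hb hbmo
  rcases eq_or_ne s 0 with rfl | hs
  · exact JohnNirenberg.avgL_exp_sub_avgR_le_two hb (K := 4 * 2 ^ n * B + 1) (by positivity)
      (by simp) (by linarith) hB hQ
  have hsB : |s| * B ≤ 1 / (40 * 2 ^ n) := by
    simpa [B, ENNReal.toReal_mul] using ENNReal.toReal_mono ENNReal.ofReal_ne_top hsb
  have hBK : 4 * 2 ^ n * B ≤ 1 / (10 * |s|) := by
    rw [le_div_iff₀ (by positivity)]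
    rw [le_div_iff₀ (by positivity)] at hsB
    linarith
  exact JohnNirenberg.avgL_exp_sub_avgR_le_two hb (by positivity) (le_of_eq (by field_simp)) hBK
    hB hQ

end
end

section
/- Let $A$ be a complex Banach algebra, $a,t\in A$, $k\ge 0$ an integer, and $\delta>0$. Then the $k$-fold iterated commutator admits the Cauchy integral representation $\mathrm{ad}_a^k(t)=\frac{k!}{2\pi i}\oint_{|z|=\delta}\frac{\exp(za)\,t\,\exp(-za)}{z^{k+1}}\,dz$, where the integral is over the positively oriented circle of radius $\delta$ about the origin. -/
/-!
Differentiating `w ↦ exp (w • a) * t * exp (-(w • a))` brings down one commutator with `a`,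
so its `k`-th derivative at `0` is `ad_a^k t`; Cauchy's integral formula for derivatives
on the circle of radius `δ` then gives the representation.
-/

open scoped Nat

open NormedSpace

section ExpConjugation

variable {𝕂 𝔸 : Type*} [RCLike 𝕂] [NormedRing 𝔸] [NormedAlgebra 𝕂 𝔸] [CompleteSpace 𝔸]

theorem hasDerivAt_exp_smul_mul_mul_exp_neg_smul (a c : 𝔸) (z : 𝕂) :
    HasDerivAt (fun w : 𝕂 => exp (w • a) * c * exp (-(w • a)))
      (exp (z • a) * (a * c - c * a) * exp (-(z • a))) z := by
  have hexp := hasDerivAt_exp_smul_const a z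
  have hexp_neg := hasDerivAt_exp_smul_const' (-a) z
  simp only [smul_neg] at hexp_neg
  refine ((hexp.mul_const c).mul hexp_neg).congr_deriv ?_
  noncomm_ring

theorem iteratedDeriv_exp_smul_mul_mul_exp_neg_smul (a c : 𝔸) (k : ℕ) :
    iteratedDeriv k (fun w : 𝕂 => exp (w • a) * c * exp (-(w • a))) =
      fun z => exp (z • a) * (fun x => a * x - x * a)^[k] c * exp (-(z • a)) := by
  induction k generalizing c with
  | zero => rfl
  | succ k ih =>
    rw [iteratedDeriv_succ', deriv_eq (hasDerivAt_exp_smul_mul_mul_exp_neg_smul a c),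
      ih, Function.iterate_succ_apply]

end ExpConjugation

/-- Cauchy integral representation of the iterated commutator in a complex
Banach algebra: `adₐᵏ(t) = (k!/(2πi)) ∮_{|z|=δ} exp(za) t exp(-za) z^{-(k+1)} dz`. -/
theorem ad_iter_eq_circleIntegral (A : Type*) [NormedRing A] [NormedAlgebra ℂ A]
    [CompleteSpace A] (a t : A) (k : ℕ) (δ : ℝ) (hδ : 0 < δ) :
    (fun x => a * x - x * a)^[k] t =
      ((k ! : ℂ) / (2 * Real.pi * Complex.I)) •
        ∮ z in C(0, δ),
          (z ^ (k + 1))⁻¹ • (NormedSpace.exp (z • a) * t * NormedSpace.exp (-(z • a))) := by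
  have hdiff : Differentiable ℂ fun w : ℂ => exp (w • a) * t * exp (-(w • a)) :=
    fun z => (hasDerivAt_exp_smul_mul_mul_exp_neg_smul a t z).differentiableAt
  have hcauchy := hdiff.differentiableOn.circleIntegral_one_div_sub_center_pow_smul
    (c := 0) hδ k
  simp only [sub_zero, one_div, iteratedDeriv_exp_smul_mul_mul_exp_neg_smul, zero_smul, neg_zero,
    exp_zero, one_mul, mul_one] at hcauchy
  have hscale : (2 * Real.pi * Complex.I / k !) ≠ 0 :=
    div_ne_zero Complex.two_pi_I_ne_zero (Nat.cast_ne_zero.2 k.factorial_ne_zero)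
  rw [hcauchy, ← inv_div, inv_smul_smul₀ hscale]
end
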